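/- Let W and A be measurable spaces, μ = μ̄_1 ⊗ ⋯ ⊗ μ̄_n a database distribution on W^n, F : W^m → A a measurable query with m ≤ n, and 𝒯_{n,m} the uniform distribution on injective sampling templates τ : Fin m → Fin n (sampling without replacement). Fix ε ≥ 0 and let ε' := log(1 + (m/n)·(e^ε − 1)). Then for every index j ∈ {1,…,n} and all v, w ∈ W: Δ_{ε'}( Σ_τ 𝒯_{n,m}(τ)·(F∘SAMP_τ)_* μ_{j,v} , Σ_τ 𝒯_{n,m}(τ)·(F∘SAMP_τ)_* μ_{j,w} ) ≤ (m/n)·SPC_{F,μ,𝒯_{n,m}}(ε). In other words, F composed with sampling without replacement achieves (log(1+(m/n)(e^ε−1)), (m/n)·SPC_{F,μ,𝒯_{n,m}}(ε))-statistical privacy for μ. -/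
import Mathlib


open MeasureTheory Real
open scoped ENNReal

noncomputable section

/-- Hockey-stick divergence / privacy curve `Δ_ε(μ,ν)`. -/
def hsDiv {A : Type*} [MeasurableSpace A] (ε : ℝ) (μ ν : Measure A) : ℝ :=
  ⨆ S : {S : Set A // MeasurableSet S}, ((μ S.1).toReal - Real.exp ε * (ν S.1).toReal)

/-- Subsampling map induced by a template. -/
def SAMP {W : Type*} {n m : ℕ} (τ : Fin m → Fin n) (x : Fin n → W) : Fin m → W :=
  fun i => x (τ i)

/-- Product measure with `j`-th factor replaced by the Dirac measure at `v`. -/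
def fixEntry {W : Type*} [MeasurableSpace W] {n : ℕ} (μbar : Fin n → Measure W)
    (j : Fin n) (v : W) : Measure (Fin n → W) :=
  Measure.pi (Function.update μbar j (Measure.dirac v))

open Classical in
/-- Sampling privacy curve `SPC^j` : conditional expectation over templates containing `j`. -/
def SPCj {W A : Type*} [MeasurableSpace W] [MeasurableSpace A] {n m : ℕ}
    (F : (Fin m → W) → A) (μbar : Fin n → Measure W)
    (𝒯 : (Fin m → Fin n) → ℝ≥0∞) (j : Fin n) (ε : ℝ) : ℝ :=
  (∑ τ : Fin m → Fin n, if j ∈ Set.range τ then (𝒯 τ).toReal *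
      (⨆ v : W, ⨆ w : W, hsDiv ε (Measure.map (fun x => F (SAMP τ x)) (fixEntry μbar j v))
        (Measure.map (fun x => F (SAMP τ x)) (fixEntry μbar j w))) else 0) /
  (∑ τ : Fin m → Fin n, if j ∈ Set.range τ then (𝒯 τ).toReal else 0)

open Classical in
/-- Uniform distribution on injective templates (sampling without replacement). -/
def uniformInj (n m : ℕ) : (Fin m → Fin n) → ℝ≥0∞ :=
  fun τ => if Function.Injective τ then
    ((Finset.univ.filter (fun σ : Fin m → Fin n => Function.Injective σ)).card : ℝ≥0∞)⁻¹ else 0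

open Classical in
/-- Conditioning of a distribution on templates to an event. -/
def condDist {n m : ℕ} (𝒯 : (Fin m → Fin n) → ℝ≥0∞) (E : Set (Fin m → Fin n)) :
    (Fin m → Fin n) → ℝ≥0∞ :=
  fun τ => if τ ∈ E then 𝒯 τ / (∑ σ : Fin m → Fin n, if σ ∈ E then 𝒯 σ else 0) else 0

/-- The increasing enumeration of a finite set of indices, as a sampling template. -/
def poissonTemplate {n : ℕ} (s : Finset (Fin n)) : Fin s.card → Fin n :=
  fun i => (s.orderIsoOfFin rfl i : Fin n)

/-- Statistical privacy curve of a query. -/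
def Phi {W A : Type*} [MeasurableSpace W] [MeasurableSpace A] {k : ℕ}
    (μbar : Fin k → Measure W) (F : (Fin k → W) → A) (ε : ℝ) : ℝ :=
  ⨆ j : Fin k, ⨆ v : W, ⨆ w : W,
    hsDiv ε (Measure.map F (fixEntry μbar j v)) (Measure.map F (fixEntry μbar j w))

/-- trade-off function -/
def tradeOff {A : Type*} [MeasurableSpace A] (P Q : Measure A) (α : ℝ) : ℝ :=
  sInf { y | ∃ S : Set A, MeasurableSet S ∧ (P Sᶜ).toReal ≤ α ∧ y = (Q S).toReal }

/-- total variation distance -/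
def tvDist {A : Type*} [MeasurableSpace A] (μ ν : Measure A) : ℝ :=
  ⨆ S : {S : Set A // MeasurableSet S}, |(μ S.1).toReal - (ν S.1).toReal|

/-- support of a measure -/
def msupport {X : Type*} [TopologicalSpace X] [MeasurableSpace X] (μ : Measure X) : Set X :=
  {x | ∀ U : Set X, IsOpen U → x ∈ U → 0 < μ U}

/-- τ ≈_j σ -/
def ApproxAt {n m : ℕ} (j : Fin n) (τ σ : Fin m → Fin n) : Prop :=
  ∀ i, (τ i ≠ j → σ i = τ i) ∧ (τ i = j → σ i ≠ j)

/-- F-samplable -/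
def FSamplable {W : Type*} [MeasurableSpace W] {n m : ℕ}
    (μbar : Fin n → Measure W) (F : (Fin m → W) → ℝ) : Prop :=
  ∀ (τ σ : Fin m → Fin n) (j : Fin n) (v w : W) (ε : ℝ), 0 ≤ ε →
    ∃ S : Set ℝ, ((∃ a, S = Set.Iic a) ∨ (∃ a, S = Set.Ici a) ∨ S = ∅) ∧
      ((Measure.map (fun x => F (SAMP τ x)) (fixEntry μbar j v)) S).toReal -
        Real.exp ε * ((Measure.map (fun x => F (SAMP σ x)) (fixEntry μbar j w)) S).toReal =
      hsDiv ε (Measure.map (fun x => F (SAMP τ x)) (fixEntry μbar j v))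
        (Measure.map (fun x => F (SAMP σ x)) (fixEntry μbar j w))

section aux
variable {W : Type*} [MeasurableSpace W]

lemma measurable_SAMP {n m : ℕ} (τ : Fin m → Fin n) :
    Measurable (SAMP τ : (Fin n → W) → Fin m → W) :=
  measurable_pi_lambda _ fun i => measurable_pi_apply _

lemma map_SAMP_pi {n m : ℕ} (ν : Fin n → Measure W) [∀ i, IsProbabilityMeasure (ν i)]
    {ρ : Fin m → Fin n} (hρ : Function.Injective ρ) :
    (Measure.pi ν).map (SAMP ρ) = Measure.pi (fun i => ν (ρ i)) := by
  classical
  refine (Measure.pi_eq fun s hs => ?_).symm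
  rw [Measure.map_apply (measurable_SAMP ρ) (MeasurableSet.univ_pi hs)]
  set t : ∀ _ : Fin n, Set W := fun k => if h : ∃ i, ρ i = k then s h.choose else Set.univ with ht
  have hti : ∀ i, t (ρ i) = s i := by
    intro i
    have h : ∃ i', ρ i' = ρ i := ⟨i, rfl⟩
    have hc : h.choose = i := hρ h.choose_spec
    simp only [t, dif_pos h, hc]
  have hpre : SAMP ρ ⁻¹' Set.pi Set.univ s = Set.pi Set.univ t := by
    ext x
    simp only [Set.mem_preimage, Set.mem_pi, Set.mem_univ, true_implies, SAMP]
    constructor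
    · intro hx k
      by_cases h : ∃ i, ρ i = k
      · simp only [t, dif_pos h]
        have := hx h.choose
        rwa [h.choose_spec] at this
      · simp only [t, dif_neg h, Set.mem_univ]
    · intro hx i
      have := hx (ρ i)
      rwa [hti i] at this
  rw [hpre, Measure.pi_pi]
  rw [← Finset.prod_subset (Finset.subset_univ (Finset.univ.image ρ))
    (fun k _ hk => by
      have h : ¬ ∃ i, ρ i = k := by
        intro ⟨i, hi⟩; exact hk (Finset.mem_image.2 ⟨i, Finset.mem_univ i, hi⟩)
      simp only [t, dif_neg h, measure_univ])]
  rw [Finset.prod_image (fun a _ b _ h => hρ h)]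
  exact Finset.prod_congr rfl fun i _ => by rw [hti i]

end aux

section aux2
variable {W : Type*} [MeasurableSpace W]

lemma prob_update {n : ℕ} (ν : Fin n → Measure W) [∀ i, IsProbabilityMeasure (ν i)]
    (i0 : Fin n) (ρ : Measure W) [IsProbabilityMeasure ρ] :
    ∀ i, IsProbabilityMeasure (Function.update ν i0 ρ i) := by
  classical
  intro i
  rcases eq_or_ne i i0 with rfl | h
  · rwa [Function.update_self]
  · rw [Function.update_of_ne h]; infer_instance

/-- Slicing a product measure along one coordinate. -/
lemma pi_apply_slice {m : ℕ} [Nonempty W] (η : Fin m → Measure W)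
    [∀ i, IsProbabilityMeasure (η i)] (i0 : Fin m) {T : Set (Fin m → W)}
    (hT : MeasurableSet T) :
    Measure.pi η T = ∫⁻ w, Measure.pi (Function.update η i0 (Measure.dirac w)) T ∂(η i0) := by
  classical
  have hf : Measurable (T.indicator (1 : (Fin m → W) → ℝ≥0∞)) :=
    measurable_const.indicator hT
  obtain ⟨x₀⟩ : Nonempty (Fin m → W) := inferInstance
  have key : ∀ (w : W),
      Measure.pi (Function.update η i0 (Measure.dirac w)) T
        = (∫⋯∫⁻_Finset.univ.erase i0, T.indicator (1 : (Fin m → W) → ℝ≥0∞) ∂η)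
            (Function.update x₀ i0 w) := by
    intro w
    haveI := prob_update η i0 (Measure.dirac w)
    rw [← lintegral_indicator_one hT,
      lintegral_eq_lmarginal_univ (μ := Function.update η i0 (Measure.dirac w)) x₀,
      lmarginal_erase _ hf (Finset.mem_univ i0)]
    rw [Function.update_self]
    have hagree : (∫⋯∫⁻_Finset.univ.erase i0, T.indicator (1 : (Fin m → W) → ℝ≥0∞)
        ∂(Function.update η i0 (Measure.dirac w))) =
        (∫⋯∫⁻_Finset.univ.erase i0, T.indicator (1 : (Fin m → W) → ℝ≥0∞) ∂η) := by
      unfold lmarginal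
      have : (fun i : {x : Fin m // x ∈ Finset.univ.erase i0} =>
          Function.update η i0 (Measure.dirac w) i.1) = fun i => η i.1 := by
        funext i
        exact Function.update_of_ne (Finset.ne_of_mem_erase i.2) _ _
      rw [this]
    rw [hagree]
    exact (lintegral_dirac' w ((Measurable.lmarginal η hf).comp (measurable_update x₀))).trans rfl
  rw [← lintegral_indicator_one hT, lintegral_eq_lmarginal_univ (μ := η) x₀,
    lmarginal_erase _ hf (Finset.mem_univ i0)]
  refine lintegral_congr fun w => ?_
  rw [key w]

end aux2

section hsd
variable {A : Type*} [MeasurableSpace A] {ε : ℝ} {μ ν : Measure A}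

lemma prob_toReal_le_one [IsProbabilityMeasure μ] (S : Set A) : (μ S).toReal ≤ 1 := by
  have h := measure_mono (Set.subset_univ S) (μ := μ)
  have := ENNReal.toReal_mono (by simp) h
  simpa using this

lemma hsDiv_bdd [IsProbabilityMeasure μ] :
    BddAbove (Set.range fun S : {S : Set A // MeasurableSet S} =>
      ((μ S.1).toReal - Real.exp ε * (ν S.1).toReal)) := by
  refine ⟨1, ?_⟩
  rintro x ⟨S, rfl⟩
  dsimp only
  have h1 : (μ S.1).toReal ≤ 1 := prob_toReal_le_one _
  nlinarith [ENNReal.toReal_nonneg (a := ν S.1), Real.exp_pos ε, ENNReal.toReal_nonneg (a := μ S.1)]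

lemma le_hsDiv [IsProbabilityMeasure μ] {S : Set A} (hS : MeasurableSet S) :
    (μ S).toReal - Real.exp ε * (ν S).toReal ≤ hsDiv ε μ ν :=
  le_ciSup hsDiv_bdd ⟨S, hS⟩

lemma hsDiv_nonneg [IsProbabilityMeasure μ] : 0 ≤ hsDiv ε μ ν := by
  have := le_hsDiv (ε := ε) (μ := μ) (ν := ν) MeasurableSet.empty
  simpa using this

lemma hsDiv_le_one [IsProbabilityMeasure μ] : hsDiv ε μ ν ≤ 1 := by
  refine ciSup_le fun S => ?_
  have h1 : (μ S.1).toReal ≤ 1 := prob_toReal_le_one _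
  nlinarith [ENNReal.toReal_nonneg (a := ν S.1), Real.exp_pos ε]

end hsd

section keys
variable {W A : Type*} [MeasurableSpace W] [MeasurableSpace A]

lemma nonempty_of_prob (μ : Measure W) [IsProbabilityMeasure μ] : Nonempty W := by
  by_contra h
  rw [not_nonempty_iff] at h
  have h1 : (μ Set.univ) = 1 := measure_univ
  rw [Set.univ_eq_empty_iff.mpr h, measure_empty] at h1
  exact zero_ne_one h1

lemma inj_update {n m : ℕ} {ρ : Fin m → Fin n} (hρ : Function.Injective ρ)
    (i0 : Fin m) {k : Fin n} (hk : k ∉ Set.range ρ) :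
    Function.Injective (Function.update ρ i0 k) := by
  classical
  intro a b hab
  by_cases ha : a = i0 <;> by_cases hb : b = i0
  · rw [ha, hb]
  · rw [ha, Function.update_self, Function.update_of_ne hb] at hab
    exact absurd ⟨b, hab.symm⟩ hk
  · rw [hb, Function.update_self, Function.update_of_ne ha] at hab
    exact absurd ⟨a, hab⟩ hk
  · rw [Function.update_of_ne ha, Function.update_of_ne hb] at hab
    exact hρ hab

variable {n m : ℕ} (μbar : Fin n → Measure W) [∀ i, IsProbabilityMeasure (μbar i)]
  {F : (Fin m → W) → A}

lemma map_fix_eq (hF : Measurable F) {ρ : Fin m → Fin n} (hρ : Function.Injective ρ) (j : Fin n) (v : W) :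
    Measure.map (fun x => F (SAMP ρ x)) (fixEntry μbar j v)
      = Measure.map F (Measure.pi fun i => Function.update μbar j (Measure.dirac v) (ρ i)) := by
  haveI := prob_update μbar j (Measure.dirac v)
  have hc : (fun x => F (SAMP ρ x)) = F ∘ SAMP ρ := rfl
  rw [fixEntry, hc, ← Measure.map_map hF (measurable_SAMP ρ), map_SAMP_pi _ hρ]

lemma map_fix_notMem (hF : Measurable F) {ρ : Fin m → Fin n} (hρ : Function.Injective ρ) {j : Fin n}
    (hj : j ∉ Set.range ρ) (v w : W) :
    Measure.map (fun x => F (SAMP ρ x)) (fixEntry μbar j v)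
      = Measure.map (fun x => F (SAMP ρ x)) (fixEntry μbar j w) := by
  rw [map_fix_eq μbar hF hρ, map_fix_eq μbar hF hρ]
  congr 1
  apply congrArg
  funext i
  rw [Function.update_of_ne (fun h => hj ⟨i, h⟩), Function.update_of_ne (fun h => hj ⟨i, h⟩)]

lemma map_fix_mem (hF : Measurable F) {ρ : Fin m → Fin n} (hρ : Function.Injective ρ) {j : Fin n} {i0 : Fin m}
    (hij : ρ i0 = j) (v : W) :
    Measure.map (fun x => F (SAMP ρ x)) (fixEntry μbar j v)
      = Measure.map F (Measure.pi
          (Function.update (fun i => μbar (ρ i)) i0 (Measure.dirac v))) := by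
  classical
  rw [map_fix_eq μbar hF hρ]
  congr 1
  apply congrArg
  funext i
  rcases eq_or_ne i i0 with rfl | hi
  · rw [hij, Function.update_self, Function.update_self]
  · have : ρ i ≠ j := fun h => hi (hρ (h.trans hij.symm))
    rw [Function.update_of_ne this, Function.update_of_ne hi]

/-- Key slicing identity. -/
lemma map_fix_slice (hF : Measurable F) {ρ : Fin m → Fin n} (hρ : Function.Injective ρ) {j : Fin n} {i0 : Fin m}
    (hij : ρ i0 = j) {k : Fin n} (hk : k ∉ Set.range ρ) (v : W)
    {S : Set A} (hS : MeasurableSet S) :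
    (Measure.map (fun x => F (SAMP (Function.update ρ i0 k) x)) (fixEntry μbar j v)) S
      = ∫⁻ w', (Measure.map (fun x => F (SAMP ρ x)) (fixEntry μbar j w')) S ∂(μbar k) := by
  classical
  haveI : Nonempty W := nonempty_of_prob (μbar k)
  have hσ : Function.Injective (Function.update ρ i0 k) := inj_update hρ i0 hk
  have hkj : k ≠ j := fun h => hk ⟨i0, (h ▸ hij : ρ i0 = k)⟩
  have hjσ : j ∉ Set.range (Function.update ρ i0 k) := by
    rintro ⟨a, ha⟩
    rcases eq_or_ne a i0 with rfl | hai
    · rw [Function.update_self] at ha; exact hkj ha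
    · rw [Function.update_of_ne hai] at ha
      exact hai (hρ (ha.trans hij.symm))
  rw [map_fix_eq μbar hF hσ]
  have hfam : (fun i => Function.update μbar j (Measure.dirac v) ((Function.update ρ i0 k) i))
      = Function.update (fun i => μbar (ρ i)) i0 (μbar k) := by
    funext i
    rcases eq_or_ne i i0 with rfl | hi
    · rw [Function.update_self, Function.update_self,
        Function.update_of_ne hkj]
    · rw [Function.update_of_ne hi, Function.update_of_ne hi,
        Function.update_of_ne (fun h => hjσ ⟨i, (Function.update_of_ne hi _ _).trans h⟩)]
  rw [hfam]
  set η := Function.update (fun i => μbar (ρ i)) i0 (μbar k) with hη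
  haveI : ∀ i, IsProbabilityMeasure (η i) := prob_update _ i0 (μbar k)
  rw [Measure.map_apply hF hS, pi_apply_slice η i0 (hF hS)]
  have hηi0 : η i0 = μbar k := Function.update_self _ _ _
  rw [hηi0]
  refine lintegral_congr fun w' => ?_
  rw [map_fix_mem μbar hF hρ hij w', Measure.map_apply hF hS]
  congr 2
  rw [hη, Function.update_idem]

end keys

section count

open Classical in
lemma injs_card_pos {n m : ℕ} (hm : m ≤ n) :
    0 < (Finset.univ.filter fun τ : Fin m → Fin n => Function.Injective τ).card := by
  refine Finset.card_pos.mpr ⟨Fin.castLE hm, ?_⟩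
  simp only [Finset.mem_filter, Finset.mem_univ, true_and]
  exact Fin.castLE_injective hm

open Classical in
lemma count_key {n m : ℕ} (j : Fin n) :
    n * (Finset.univ.filter fun τ : Fin m → Fin n =>
        Function.Injective τ ∧ j ∈ Set.range τ).card
      = m * (Finset.univ.filter fun τ : Fin m → Fin n => Function.Injective τ).card := by
  classical
  have hconst : ∀ j' : Fin n,
      (Finset.univ.filter fun τ : Fin m → Fin n =>
        Function.Injective τ ∧ j' ∈ Set.range τ).card
        = (Finset.univ.filter fun τ : Fin m → Fin n =>
            Function.Injective τ ∧ j ∈ Set.range τ).card := by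
    intro j'
    apply Finset.card_bij' (fun τ _ => (Equiv.swap j j') ∘ τ) (fun τ _ => (Equiv.swap j j') ∘ τ)
    · intro τ hτ
      simp only [Finset.mem_filter, Finset.mem_univ, true_and] at hτ ⊢
      obtain ⟨h1, i, hi⟩ := hτ
      refine ⟨(Equiv.swap j j').injective.comp h1, i, ?_⟩
      simp only [Function.comp_apply, hi, Equiv.swap_apply_right]
    · intro τ hτ
      simp only [Finset.mem_filter, Finset.mem_univ, true_and] at hτ ⊢
      obtain ⟨h1, i, hi⟩ := hτ
      refine ⟨(Equiv.swap j j').injective.comp h1, i, ?_⟩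
      simp only [Function.comp_apply, hi, Equiv.swap_apply_left]
    · intro τ _
      funext i
      simp [Equiv.swap_apply_self]
    · intro τ _
      funext i
      simp [Equiv.swap_apply_self]
  have hsum : (∑ j' : Fin n, (Finset.univ.filter fun τ : Fin m → Fin n =>
      Function.Injective τ ∧ j' ∈ Set.range τ).card)
      = m * (Finset.univ.filter fun τ : Fin m → Fin n => Function.Injective τ).card := by
    have step1 : ∀ j' : Fin n, (Finset.univ.filter fun τ : Fin m → Fin n =>
        Function.Injective τ ∧ j' ∈ Set.range τ).card
        = ∑ τ : Fin m → Fin n, if Function.Injective τ ∧ j' ∈ Set.range τ then 1 else 0 := by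
      intro j'; rw [Finset.card_filter]
    simp_rw [step1]
    rw [Finset.sum_comm]
    have step2 : ∀ τ : Fin m → Fin n,
        (∑ j' : Fin n, if Function.Injective τ ∧ j' ∈ Set.range τ then 1 else 0)
        = if Function.Injective τ then m else 0 := by
      intro τ
      by_cases hτ : Function.Injective τ
      · simp only [hτ, true_and, if_true]
        have : (∑ j' : Fin n, if j' ∈ Set.range τ then 1 else 0)
            = (Finset.univ.filter fun j' : Fin n => j' ∈ Set.range τ).card := by
          rw [Finset.card_filter]
        rw [this]
        have himg : (Finset.univ.filter fun j' : Fin n => j' ∈ Set.range τ)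
            = Finset.univ.image τ := by
          ext k; simp [Set.mem_range]
        rw [himg, Finset.card_image_of_injective _ hτ, Finset.card_univ, Fintype.card_fin]
      · simp [hτ]
    simp_rw [step2]
    rw [← Finset.sum_filter, Finset.sum_const, smul_eq_mul, mul_comm]
  calc n * (Finset.univ.filter fun τ : Fin m → Fin n =>
        Function.Injective τ ∧ j ∈ Set.range τ).card
      = ∑ _j' : Fin n, (Finset.univ.filter fun τ : Fin m → Fin n =>
          Function.Injective τ ∧ j ∈ Set.range τ).card := by
        rw [Finset.sum_const, Finset.card_univ, Fintype.card_fin, smul_eq_mul]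
    _ = ∑ j' : Fin n, (Finset.univ.filter fun τ : Fin m → Fin n =>
          Function.Injective τ ∧ j' ∈ Set.range τ).card := by
        exact (Finset.sum_congr rfl fun j' _ => (hconst j').symm)
    _ = _ := hsum

end count

section transfer

open Classical in
lemma transfer {n m : ℕ} (j : Fin n) (pick : (Fin m → Fin n) → Fin m)
    (hpick : ∀ τ : Fin m → Fin n, Function.Injective τ → j ∈ Set.range τ → τ (pick τ) = j)
    (f : (Fin m → Fin n) → ℝ) :
    (m : ℝ) * ∑ σ ∈ Finset.univ.filter
        (fun σ : Fin m → Fin n => Function.Injective σ ∧ j ∉ Set.range σ), f σ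
      = ∑ τ ∈ Finset.univ.filter
          (fun τ : Fin m → Fin n => Function.Injective τ ∧ j ∈ Set.range τ),
          ∑ k ∈ Finset.univ.filter (fun k : Fin n => k ∉ Set.range τ),
            f (Function.update τ (pick τ) k) := by
  classical
  set Sc := Finset.univ.filter
    (fun σ : Fin m → Fin n => Function.Injective σ ∧ j ∉ Set.range σ) with hSc
  set Sj := Finset.univ.filter
    (fun τ : Fin m → Fin n => Function.Injective τ ∧ j ∈ Set.range τ) with hSj
  set B := (Sj ×ˢ (Finset.univ : Finset (Fin n))).filter
    (fun z : (Fin m → Fin n) × Fin n => z.2 ∉ Set.range z.1) with hB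
  have hL : (m : ℝ) * ∑ σ ∈ Sc, f σ
      = ∑ z ∈ Sc ×ˢ (Finset.univ : Finset (Fin m)), f z.1 := by
    rw [Finset.sum_product, Finset.mul_sum]
    refine Finset.sum_congr rfl fun σ _ => ?_
    rw [show (∑ y : Fin m, f (σ, y).1) = ∑ _y : Fin m, f σ from rfl,
      Finset.sum_const, Finset.card_univ, Fintype.card_fin, nsmul_eq_mul]
  have hR : (∑ z ∈ B, f (Function.update z.1 (pick z.1) z.2))
      = ∑ τ ∈ Sj, ∑ k ∈ Finset.univ.filter (fun k : Fin n => k ∉ Set.range τ),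
          f (Function.update τ (pick τ) k) := by
    rw [hB, Finset.sum_filter, Finset.sum_product]
    exact Finset.sum_congr rfl fun τ _ => (Finset.sum_filter _ _).symm
  rw [hL, ← hR]
  refine Finset.sum_bij'
    (fun z _ => (Function.update z.1 z.2 j, z.1 z.2))
    (fun z _ => (Function.update z.1 (pick z.1) z.2, pick z.1)) ?_ ?_ ?_ ?_ ?_
  · -- maps into B
    rintro ⟨σ, i0⟩ hz
    have hmem := (Finset.mem_product.mp hz).1
    rw [hSc, Finset.mem_filter] at hmem
    obtain ⟨-, hinj, hjr⟩ := hmem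
    have hτinj : Function.Injective (Function.update σ i0 j) := inj_update hinj i0 hjr
    rw [hB, Finset.mem_filter, Finset.mem_product, hSj, Finset.mem_filter]
    refine ⟨⟨⟨Finset.mem_univ _, hτinj, ⟨i0, Function.update_self _ _ _⟩⟩,
      Finset.mem_univ _⟩, ?_⟩
    rintro ⟨a, ha⟩
    dsimp only at ha
    by_cases hai : a = i0
    · rw [hai, Function.update_self] at ha
      exact hjr ⟨i0, ha.symm ▸ rfl⟩
    · rw [Function.update_of_ne hai] at ha
      exact hai (hinj ha)
  · -- maps back
    rintro ⟨τ, k⟩ hz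
    rw [hB, Finset.mem_filter, Finset.mem_product, hSj, Finset.mem_filter] at hz
    obtain ⟨⟨⟨-, hinj, hjr⟩, -⟩, hk⟩ := hz
    have hp : τ (pick τ) = j := hpick τ hinj hjr
    have hσinj : Function.Injective (Function.update τ (pick τ) k) := inj_update hinj _ hk
    rw [Finset.mem_product, hSc, Finset.mem_filter]
    refine ⟨⟨Finset.mem_univ _, hσinj, ?_⟩, Finset.mem_univ _⟩
    rintro ⟨a, ha⟩
    dsimp only at ha
    by_cases hai : a = pick τ
    · rw [hai, Function.update_self] at ha
      exact hk (ha ▸ ⟨pick τ, hp⟩)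
    · rw [Function.update_of_ne hai] at ha
      exact hai (hinj (ha.trans hp.symm))
  · -- left inverse
    rintro ⟨σ, i0⟩ hz
    have hmem := (Finset.mem_product.mp hz).1
    rw [hSc, Finset.mem_filter] at hmem
    obtain ⟨-, hinj, hjr⟩ := hmem
    have hτinj : Function.Injective (Function.update σ i0 j) := inj_update hinj i0 hjr
    have hp : pick (Function.update σ i0 j) = i0 :=
      hτinj (by rw [hpick _ hτinj ⟨i0, Function.update_self _ _ _⟩, Function.update_self])
    simp only [hp, Function.update_self, Function.update_idem, Prod.mk.injEq]
    exact ⟨Function.update_eq_self _ _, trivial⟩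
  · -- right inverse
    rintro ⟨τ, k⟩ hz
    rw [hB, Finset.mem_filter, Finset.mem_product, hSj, Finset.mem_filter] at hz
    obtain ⟨⟨⟨-, hinj, hjr⟩, -⟩, hk⟩ := hz
    have hp : τ (pick τ) = j := hpick τ hinj hjr
    simp only [Function.update_self, Function.update_idem, Prod.mk.injEq]
    refine ⟨?_, trivial⟩
    rw [← hp]
    exact Function.update_eq_self _ _
  · -- values agree
    rintro ⟨σ, i0⟩ hz
    have hmem := (Finset.mem_product.mp hz).1
    rw [hSc, Finset.mem_filter] at hmem
    obtain ⟨-, hinj, hjr⟩ := hmem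
    have hτinj : Function.Injective (Function.update σ i0 j) := inj_update hinj i0 hjr
    have hp : pick (Function.update σ i0 j) = i0 :=
      hτinj (by rw [hpick _ hτinj ⟨i0, Function.update_self _ _ _⟩, Function.update_self])
    simp only [hp, Function.update_idem, Function.update_eq_self]

end transfer

section PMDS
variable {W A : Type*} [MeasurableSpace W] [MeasurableSpace A]

def PM {n m : ℕ} (μbar : Fin n → Measure W) (F : (Fin m → W) → A) (j : Fin n)
    (τ : Fin m → Fin n) (x : W) : Measure A :=
  Measure.map (fun y => F (SAMP τ y)) (fixEntry μbar j x)

def DS {n m : ℕ} (μbar : Fin n → Measure W) (F : (Fin m → W) → A) (ε : ℝ) (j : Fin n)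
    (τ : Fin m → Fin n) : ℝ :=
  ⨆ v : W, ⨆ w : W, hsDiv ε (PM μbar F j τ v) (PM μbar F j τ w)

variable {n m : ℕ} (μbar : Fin n → Measure W) [∀ i, IsProbabilityMeasure (μbar i)]
  {F : (Fin m → W) → A}

lemma PM_prob (hF : Measurable F) (j : Fin n) (τ : Fin m → Fin n) (x : W) :
    IsProbabilityMeasure (PM μbar F j τ x) := by
  haveI := prob_update μbar j (Measure.dirac x)
  haveI : IsProbabilityMeasure (fixEntry μbar j x) := by
    unfold fixEntry; infer_instance
  exact Measure.isProbabilityMeasure_map ((hF.comp (measurable_SAMP τ)).aemeasurable)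

lemma le_DS [Nonempty W] (hF : Measurable F) (ε : ℝ) (j : Fin n) (τ : Fin m → Fin n)
    (v' w' : W) :
    hsDiv ε (PM μbar F j τ v') (PM μbar F j τ w') ≤ DS μbar F ε j τ := by
  have hP : ∀ x : W, IsProbabilityMeasure (PM μbar F j τ x) := PM_prob μbar hF j τ
  have h1 : hsDiv ε (PM μbar F j τ v') (PM μbar F j τ w')
      ≤ ⨆ w'' : W, hsDiv ε (PM μbar F j τ v') (PM μbar F j τ w'') :=
    le_ciSup (f := fun w'' : W => hsDiv ε (PM μbar F j τ v') (PM μbar F j τ w''))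
      ⟨1, by rintro x ⟨w'', rfl⟩; dsimp only; haveI := hP v'; exact hsDiv_le_one⟩ w'
  refine h1.trans ?_
  exact le_ciSup (f := fun v'' : W => ⨆ w'' : W, hsDiv ε (PM μbar F j τ v'') (PM μbar F j τ w''))
    ⟨1, by
      rintro x ⟨v'', rfl⟩
      dsimp only
      exact ciSup_le fun w'' => by haveI := hP v''; exact hsDiv_le_one⟩ v'

lemma DS_nonneg [Nonempty W] (hF : Measurable F) (ε : ℝ) (j : Fin n) (τ : Fin m → Fin n) :
    0 ≤ DS μbar F ε j τ := by
  have hP : ∀ x : W, IsProbabilityMeasure (PM μbar F j τ x) := PM_prob μbar hF j τ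
  obtain ⟨x⟩ := (inferInstance : Nonempty W)
  haveI := hP x
  exact (hsDiv_nonneg (ε := ε) (μ := PM μbar F j τ x) (ν := PM μbar F j τ x)).trans
    (le_DS μbar hF ε j τ x x)

end PMDS

section main

open Classical in
lemma main_per_set {W A : Type*} [MeasurableSpace W] [MeasurableSpace A] {n m : ℕ}
    (hn : 0 < n) (hm : m ≤ n) (hm0 : 0 < m)
    (μbar : Fin n → Measure W) [∀ i, IsProbabilityMeasure (μbar i)]
    {F : (Fin m → W) → A} (hF : Measurable F)
    (ε : ℝ) (hε : 0 ≤ ε) (j : Fin n) (v w : W) {S : Set A} (hS : MeasurableSet S) :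
    (∑ τ : Fin m → Fin n, (uniformInj n m τ).toReal * ((PM μbar F j τ v) S).toReal)
      - (1 + ((m : ℝ) / n) * (Real.exp ε - 1)) *
        (∑ τ : Fin m → Fin n, (uniformInj n m τ).toReal * ((PM μbar F j τ w) S).toReal)
      ≤ ∑ τ : Fin m → Fin n,
          if j ∈ Set.range τ then (uniformInj n m τ).toReal * DS μbar F ε j τ else 0 := by
  classical
  haveI : Nonempty W := nonempty_of_prob (μbar j)
  have hP : ∀ (τ : Fin m → Fin n) (x : W), IsProbabilityMeasure (PM μbar F j τ x) :=
    fun τ x => PM_prob μbar hF j τ x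
  set X := Real.exp ε with hX
  have hX1 : 1 ≤ X := by rw [hX, ← Real.exp_zero]; exact Real.exp_le_exp.mpr hε
  have hX0 : 0 < X := lt_of_lt_of_le one_pos hX1
  have hnR : (0:ℝ) < n := by exact_mod_cast hn
  have hmR : (0:ℝ) < m := by exact_mod_cast hm0
  set E : ℝ := 1 + ((m : ℝ) / n) * (X - 1) with hE
  have hE1 : 1 ≤ E := by
    have : 0 ≤ ((m:ℝ)/n) * (X-1) := mul_nonneg (by positivity) (by linarith)
    rw [hE]; linarith
  set N := (Finset.univ.filter fun σ : Fin m → Fin n => Function.Injective σ).card with hN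
  have hNpos : 0 < N := injs_card_pos hm
  have hNR : (0:ℝ) < N := by exact_mod_cast hNpos
  set r : ℝ := (N:ℝ)⁻¹ with hr
  have hr0 : 0 ≤ r := by positivity
  have hu : ∀ τ : Fin m → Fin n,
      (uniformInj n m τ).toReal = if Function.Injective τ then r else 0 := by
    intro τ
    rw [uniformInj]
    split_ifs with h
    · rw [ENNReal.toReal_inv, hr, hN]
      norm_num
    · rfl
  set pick : (Fin m → Fin n) → Fin m :=
    fun τ => if h : ∃ i, τ i = j then h.choose else ⟨0, hm0⟩ with hpickdef
  have hpick : ∀ τ : Fin m → Fin n, Function.Injective τ → j ∈ Set.range τ →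
      τ (pick τ) = j := by
    intro τ _ hjr
    obtain ⟨i, hi⟩ := hjr
    have h : ∃ i, τ i = j := ⟨i, hi⟩
    simp only [hpickdef, dif_pos h]
    exact h.choose_spec
  set Sj := Finset.univ.filter
    (fun τ : Fin m → Fin n => Function.Injective τ ∧ j ∈ Set.range τ) with hSj
  set Sc := Finset.univ.filter
    (fun τ : Fin m → Fin n => Function.Injective τ ∧ j ∉ Set.range τ) with hSc
  have convA : ∀ x : W,
      (∑ τ : Fin m → Fin n, (uniformInj n m τ).toReal * ((PM μbar F j τ x) S).toReal)
        = (∑ τ ∈ Sj, r * ((PM μbar F j τ x) S).toReal)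
          + ∑ τ ∈ Sc, r * ((PM μbar F j τ x) S).toReal := by
    intro x
    have h1 : (∑ τ : Fin m → Fin n, (uniformInj n m τ).toReal * ((PM μbar F j τ x) S).toReal)
        = ∑ τ ∈ Finset.univ.filter (fun τ : Fin m → Fin n => Function.Injective τ),
            r * ((PM μbar F j τ x) S).toReal := by
      rw [Finset.sum_filter]
      refine Finset.sum_congr rfl fun τ _ => ?_
      rw [hu τ]
      by_cases hτ : Function.Injective τ <;> simp [hτ]
    rw [h1, ← Finset.sum_filter_add_sum_filter_not
      (Finset.univ.filter (fun τ : Fin m → Fin n => Function.Injective τ))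
      (fun τ => j ∈ Set.range τ), Finset.filter_filter, Finset.filter_filter]
  have convB :
      (∑ τ : Fin m → Fin n,
          if j ∈ Set.range τ then (uniformInj n m τ).toReal * DS μbar F ε j τ else 0)
        = ∑ τ ∈ Sj, r * DS μbar F ε j τ := by
    rw [hSj, Finset.sum_filter]
    refine Finset.sum_congr rfl fun τ _ => ?_
    rw [hu τ]
    by_cases h1 : Function.Injective τ <;> by_cases h2 : j ∈ Set.range τ <;> simp [h1, h2]
  have hScvw : ∀ τ ∈ Sc, ((PM μbar F j τ w) S).toReal = ((PM μbar F j τ v) S).toReal := by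
    intro τ hτ
    rw [hSc, Finset.mem_filter] at hτ
    obtain ⟨-, hinj, hjr⟩ := hτ
    rw [PM, PM, map_fix_notMem μbar hF hinj hjr w v]
  have hT := transfer j pick hpick (fun σ => ((PM μbar F j σ v) S).toReal)
  rw [← hSj, ← hSc] at hT
  try dsimp only at hT
  -- per τ bound
  have per : ∀ τ ∈ Sj,
      ((PM μbar F j τ v) S).toReal - E * ((PM μbar F j τ w) S).toReal
        - ((E - 1)/m) * ∑ k ∈ Finset.univ.filter (fun k : Fin n => k ∉ Set.range τ),
            ((PM μbar F j (Function.update τ (pick τ) k) v) S).toReal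
      ≤ DS μbar F ε j τ := by
    intro τ hτ
    rw [hSj, Finset.mem_filter] at hτ
    obtain ⟨-, hinj, hjr⟩ := hτ
    have hij : τ (pick τ) = j := hpick τ hinj hjr
    have base : ∀ w' : W,
        ((PM μbar F j τ v) S).toReal - X * ((PM μbar F j τ w') S).toReal
          ≤ DS μbar F ε j τ := by
      intro w'
      refine le_trans ?_ (le_DS μbar hF ε j τ v w')
      haveI := hP τ v
      exact le_hsDiv hS
    have hvw := base w
    have hkbound : ∀ k, k ∉ Set.range τ →
        ((PM μbar F j τ v) S).toReal
          - X * ((PM μbar F j (Function.update τ (pick τ) k) v) S).toReal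
          ≤ DS μbar F ε j τ := by
      intro k hk
      have hslice : (PM μbar F j (Function.update τ (pick τ) k) v) S
          = ∫⁻ w', (PM μbar F j τ w') S ∂(μbar k) := by
        rw [PM]
        exact map_fix_slice μbar hF hinj hij hk v hS
      have hpt : ∀ w' : W,
          ENNReal.ofReal ((((PM μbar F j τ v) S).toReal - DS μbar F ε j τ)/X)
            ≤ (PM μbar F j τ w') S := by
        intro w'
        haveI := hP τ w'
        rw [ENNReal.ofReal_le_iff_le_toReal (measure_ne_top _ _), div_le_iff₀ hX0]
        have hb := base w'
        nlinarith [hb]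
      have hint : ENNReal.ofReal ((((PM μbar F j τ v) S).toReal - DS μbar F ε j τ)/X)
          ≤ (PM μbar F j (Function.update τ (pick τ) k) v) S := by
        rw [hslice]
        calc ENNReal.ofReal ((((PM μbar F j τ v) S).toReal - DS μbar F ε j τ)/X)
            = ∫⁻ _, ENNReal.ofReal ((((PM μbar F j τ v) S).toReal - DS μbar F ε j τ)/X)
                ∂(μbar k) := by rw [lintegral_const, measure_univ, mul_one]
          _ ≤ _ := lintegral_mono fun w' => hpt w'
      haveI := hP (Function.update τ (pick τ) k) v
      rw [ENNReal.ofReal_le_iff_le_toReal (measure_ne_top _ _), div_le_iff₀ hX0] at hint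
      nlinarith [hint]
    set K := Finset.univ.filter (fun k : Fin n => k ∉ Set.range τ) with hK
    have hKcard : (K.card : ℝ) = (n : ℝ) - m := by
      have himg : K = Finset.univ \ Finset.univ.image τ := by
        ext k; simp [hK, Set.mem_range]
      rw [himg, Finset.card_sdiff_of_subset (Finset.subset_univ _),
        Nat.cast_sub (Finset.card_le_card (Finset.subset_univ _)), Finset.card_univ, Fintype.card_fin,
        Finset.card_image_of_injective _ hinj, Finset.card_univ, Fintype.card_fin]
    have hsumk : ((n:ℝ) - m) * ((PM μbar F j τ v) S).toReal
        - X * (∑ k ∈ K, ((PM μbar F j (Function.update τ (pick τ) k) v) S).toReal)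
        ≤ ((n:ℝ) - m) * DS μbar F ε j τ := by
      have h1 : ∑ k ∈ K, (((PM μbar F j τ v) S).toReal
            - X * ((PM μbar F j (Function.update τ (pick τ) k) v) S).toReal)
          ≤ ∑ _k ∈ K, DS μbar F ε j τ :=
        Finset.sum_le_sum fun k hk =>
          hkbound k (by rw [hK, Finset.mem_filter] at hk; exact hk.2)
      rw [Finset.sum_sub_distrib, Finset.sum_const, nsmul_eq_mul, ← Finset.mul_sum] at h1
      rw [Finset.sum_const, nsmul_eq_mul] at h1
      rw [hKcard] at h1
      exact h1
    have hcoef : E/X + ((n:ℝ)-m) * ((E-1)/(m*X)) = 1 := by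
      rw [hE]
      field_simp
      ring
    have hθ : 0 ≤ E/X := by positivity
    have hβ : 0 ≤ (E-1)/(m*X) := by
      apply div_nonneg (by linarith) (by positivity)
    have c1 := mul_le_mul_of_nonneg_left hvw hθ
    have c2 := mul_le_mul_of_nonneg_left hsumk hβ
    have hsum := add_le_add c1 c2
    have eL : (E/X)*(((PM μbar F j τ v) S).toReal - X * ((PM μbar F j τ w) S).toReal)
        + ((E-1)/(m*X))*(((n:ℝ)-m)*((PM μbar F j τ v) S).toReal
            - X * (∑ k ∈ K, ((PM μbar F j (Function.update τ (pick τ) k) v) S).toReal))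
        = ((PM μbar F j τ v) S).toReal - E * ((PM μbar F j τ w) S).toReal
          - ((E - 1)/m) * ∑ k ∈ K,
              ((PM μbar F j (Function.update τ (pick τ) k) v) S).toReal := by
      rw [hE]
      field_simp
      ring
    have eR : (E/X)*(DS μbar F ε j τ) + ((E-1)/(m*X))*(((n:ℝ)-m)*DS μbar F ε j τ)
        = DS μbar F ε j τ := by
      rw [hE]
      field_simp
      ring
    rw [eL, eR] at hsum
    exact hsum
  -- assemble
  rw [convA v, convA w, convB]
  have hScw : ∑ τ ∈ Sc, r * ((PM μbar F j τ w) S).toReal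
      = ∑ τ ∈ Sc, r * ((PM μbar F j τ v) S).toReal :=
    Finset.sum_congr rfl (fun τ hτ => by rw [hScvw τ hτ])
  rw [hScw]
  have hTr : ∑ σ ∈ Sc, ((PM μbar F j σ v) S).toReal
      = (∑ τ ∈ Sj, ∑ k ∈ Finset.univ.filter (fun k : Fin n => k ∉ Set.range τ),
          ((PM μbar F j (Function.update τ (pick τ) k) v) S).toReal) / m :=
    (eq_div_iff (ne_of_gt hmR)).mpr (by rw [mul_comm] at hT; exact hT)
  have expand : ∑ τ ∈ Sj, (r * (((PM μbar F j τ v) S).toReal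
        - E * ((PM μbar F j τ w) S).toReal
        - ((E - 1)/m) * ∑ k ∈ Finset.univ.filter (fun k : Fin n => k ∉ Set.range τ),
            ((PM μbar F j (Function.update τ (pick τ) k) v) S).toReal))
      = (∑ τ ∈ Sj, r * ((PM μbar F j τ v) S).toReal)
        - E * (∑ τ ∈ Sj, r * ((PM μbar F j τ w) S).toReal)
        - ((E-1)/m) * r * (∑ τ ∈ Sj,
            ∑ k ∈ Finset.univ.filter (fun k : Fin n => k ∉ Set.range τ),
              ((PM μbar F j (Function.update τ (pick τ) k) v) S).toReal) := by
    rw [Finset.mul_sum, Finset.mul_sum]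
    rw [← Finset.sum_sub_distrib, ← Finset.sum_sub_distrib]
    refine Finset.sum_congr rfl fun τ _ => ?_
    ring
  have final : ∑ τ ∈ Sj, (r * (((PM μbar F j τ v) S).toReal
        - E * ((PM μbar F j τ w) S).toReal
        - ((E - 1)/m) * ∑ k ∈ Finset.univ.filter (fun k : Fin n => k ∉ Set.range τ),
            ((PM μbar F j (Function.update τ (pick τ) k) v) S).toReal))
      ≤ ∑ τ ∈ Sj, r * DS μbar F ε j τ :=
    Finset.sum_le_sum fun τ hτ => mul_le_mul_of_nonneg_left (per τ hτ) hr0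
  rw [expand] at final
  have hCsum : ∑ τ ∈ Sc, r * ((PM μbar F j τ v) S).toReal
      = r * ∑ τ ∈ Sc, ((PM μbar F j τ v) S).toReal := (Finset.mul_sum _ _ _).symm
  rw [hCsum, hTr]
  have hrearr : (∑ τ ∈ Sj, r * ((PM μbar F j τ v) S).toReal)
      + r * ((∑ τ ∈ Sj, ∑ k ∈ Finset.univ.filter (fun k : Fin n => k ∉ Set.range τ),
          ((PM μbar F j (Function.update τ (pick τ) k) v) S).toReal) / m)
      - E * ((∑ τ ∈ Sj, r * ((PM μbar F j τ w) S).toReal)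
        + r * ((∑ τ ∈ Sj, ∑ k ∈ Finset.univ.filter (fun k : Fin n => k ∉ Set.range τ),
            ((PM μbar F j (Function.update τ (pick τ) k) v) S).toReal) / m))
      = (∑ τ ∈ Sj, r * ((PM μbar F j τ v) S).toReal)
        - E * (∑ τ ∈ Sj, r * ((PM μbar F j τ w) S).toReal)
        - (E - 1) / ↑m * r * (∑ τ ∈ Sj,
            ∑ k ∈ Finset.univ.filter (fun k : Fin n => k ∉ Set.range τ),
              ((PM μbar F j (Function.update τ (pick τ) k) v) S).toReal) := by
    field_simp
    ring
  linarith [final, hrearr]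

end main

/-- privacy amplification by sampling without replacement:
`F ∘ SAMP` under the uniform distribution on injective templates achieves
`(log(1+(m/n)(e^ε−1)), (m/n)·SPC(ε))`-statistical privacy. -/
theorem subsampling_without_replacement
    {W A : Type*} [MeasurableSpace W] [MeasurableSpace A] {n m : ℕ}
    (hn : 0 < n) (hm : m ≤ n)
    (μbar : Fin n → Measure W) (hμ : ∀ i, IsProbabilityMeasure (μbar i))
    (F : (Fin m → W) → A) (hF : Measurable F)
    (ε : ℝ) (hε : 0 ≤ ε) (j : Fin n) (v w : W) :
    hsDiv (Real.log (1 + ((m : ℝ) / (n : ℝ)) * (Real.exp ε - 1)))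
      (Measure.sum fun τ : Fin m → Fin n =>
        uniformInj n m τ • Measure.map (fun x => F (SAMP τ x)) (fixEntry μbar j v))
      (Measure.sum fun τ : Fin m → Fin n =>
        uniformInj n m τ • Measure.map (fun x => F (SAMP τ x)) (fixEntry μbar j w))
      ≤ ((m : ℝ) / (n : ℝ)) * ⨆ j' : Fin n, SPCj F μbar (uniformInj n m) j' ε := by
  classical
  haveI : Nonempty W := nonempty_of_prob (μbar j)
  have hnR : (0:ℝ) < n := by exact_mod_cast hn
  rcases Nat.eq_zero_or_pos m with hm0 | hm0
  · -- degenerate case m = 0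
    subst hm0
    have hMeq : (Measure.sum fun τ : Fin 0 → Fin n =>
          uniformInj n 0 τ • Measure.map (fun x => F (SAMP τ x)) (fixEntry μbar j v))
        = Measure.sum fun τ : Fin 0 → Fin n =>
          uniformInj n 0 τ • Measure.map (fun x => F (SAMP τ x)) (fixEntry μbar j w) := by
      congr 1
      funext τ
      have hinj : Function.Injective τ := fun a => a.elim0
      have hj : j ∉ Set.range τ := by rintro ⟨i, -⟩; exact i.elim0
      rw [map_fix_notMem μbar hF hinj hj v w]
    rw [hMeq]
    have hz : ((0:ℕ) : ℝ) / (n : ℝ) = 0 := by norm_num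
    rw [hz, zero_mul]
    refine ciSup_le fun S => ?_
    simp [Real.log_one]
  · -- main case m > 0
    have hmR : (0:ℝ) < m := by exact_mod_cast hm0
    have hX1 : 1 ≤ Real.exp ε := by
      rw [← Real.exp_zero]; exact Real.exp_le_exp.mpr hε
    have hEpos : (0:ℝ) < 1 + ((m : ℝ) / n) * (Real.exp ε - 1) := by
      have : 0 ≤ ((m:ℝ)/n) * (Real.exp ε - 1) :=
        mul_nonneg (by positivity) (by linarith)
      linarith
    set N := (Finset.univ.filter fun σ : Fin m → Fin n => Function.Injective σ).card with hN
    have hNpos : 0 < N := injs_card_pos hm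
    have hNR : (0:ℝ) < N := by exact_mod_cast hNpos
    have hu : ∀ τ : Fin m → Fin n,
        (uniformInj n m τ).toReal = if Function.Injective τ then ((N:ℝ))⁻¹ else 0 := by
      intro τ
      rw [uniformInj]
      split_ifs with h
      · rw [ENNReal.toReal_inv, hN]; norm_num
      · rfl
    have hune : ∀ τ : Fin m → Fin n, uniformInj n m τ ≠ ∞ := by
      intro τ
      rw [uniformInj]
      split_ifs with h
      · exact ENNReal.inv_ne_top.mpr (by exact_mod_cast hNpos.ne')
      · exact ENNReal.zero_ne_top
    refine ciSup_le ?_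
    rintro ⟨S, hS⟩
    dsimp only
    have happ : ∀ x : W,
        ((Measure.sum fun τ : Fin m → Fin n =>
            uniformInj n m τ • Measure.map (fun y => F (SAMP τ y)) (fixEntry μbar j x)) S).toReal
          = ∑ τ : Fin m → Fin n,
              (uniformInj n m τ).toReal * ((PM μbar F j τ x) S).toReal := by
      intro x
      rw [Measure.sum_apply _ hS, tsum_fintype, ENNReal.toReal_sum]
      · refine Finset.sum_congr rfl fun τ _ => ?_
        rw [Measure.smul_apply, smul_eq_mul, ENNReal.toReal_mul]
        rfl
      · intro τ _
        rw [Measure.smul_apply, smul_eq_mul]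
        haveI := PM_prob μbar hF j τ x
        exact ENNReal.mul_ne_top (hune τ) (measure_ne_top (PM μbar F j τ x) S)
    rw [Real.exp_log hEpos, happ v, happ w]
    refine le_trans (main_per_set hn hm hm0 μbar hF ε hε j v w hS) ?_
    have hDen : (∑ τ : Fin m → Fin n, if j ∈ Set.range τ then (uniformInj n m τ).toReal else 0)
        = (m:ℝ)/n := by
      have h1 : (∑ τ : Fin m → Fin n, if j ∈ Set.range τ then (uniformInj n m τ).toReal else 0)
          = ∑ _τ ∈ Finset.univ.filter
              (fun τ : Fin m → Fin n => Function.Injective τ ∧ j ∈ Set.range τ), ((N:ℝ))⁻¹ := by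
        rw [Finset.sum_filter]
        refine Finset.sum_congr rfl fun τ _ => ?_
        by_cases h1 : Function.Injective τ <;> by_cases h2 : j ∈ Set.range τ <;>
          simp [hu τ, h1, h2]
      rw [h1, Finset.sum_const, nsmul_eq_mul]
      have hck : (n:ℝ) * (Finset.univ.filter
          (fun τ : Fin m → Fin n => Function.Injective τ ∧ j ∈ Set.range τ)).card
          = (m:ℝ) * N := by exact_mod_cast count_key j
      rw [← div_eq_mul_inv, div_eq_div_iff hNR.ne' hnR.ne']
      linarith [hck]
    have hSP : SPCj F μbar (uniformInj n m) j ε * ((m:ℝ)/n)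
        = ∑ τ : Fin m → Fin n,
            if j ∈ Set.range τ then (uniformInj n m τ).toReal * DS μbar F ε j τ else 0 := by
      have hDS : ∀ τ : Fin m → Fin n, DS μbar F ε j τ
          = ⨆ v' : W, ⨆ w' : W, hsDiv ε
              (Measure.map (fun x => F (SAMP τ x)) (fixEntry μbar j v'))
              (Measure.map (fun x => F (SAMP τ x)) (fixEntry μbar j w')) := fun τ => rfl
      simp only [SPCj, hDS]
      rw [hDen, div_mul_cancel₀]
      exact ne_of_gt (by positivity)
    have hfin : (∑ τ : Fin m → Fin n,
          if j ∈ Set.range τ then (uniformInj n m τ).toReal * DS μbar F ε j τ else 0)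
        = ((m:ℝ)/n) * SPCj F μbar (uniformInj n m) j ε := by
      rw [← hSP]; ring
    rw [hfin]
    refine mul_le_mul_of_nonneg_left ?_ (by positivity)
    exact le_ciSup (f := fun j' : Fin n => SPCj F μbar (uniformInj n m) j' ε)
      (Set.finite_range _).bddAbove j

end
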